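/- For a C² embedded arc-length parametrized curve f, the pointwise decomposition M₀(f) = M₁(f) + M₂(f) holds for s1 ≠ s2, where M₀(f) = (1 − cos φ)/‖Δf‖² with cos φ = (‖Δf‖²/2)·∂²/(∂s1∂s2) log‖Δf‖², M₁(f) = ‖τ(s1)−τ(s2)‖²/(2‖Δf‖²), and M₂(f) = (2/‖Δf‖²)[τ(s1)·τ(s2) − (τ(s1)·Δf)(τ(s2)·Δf)/‖Δf‖²]. -/

import Mathlib

/-!
Write `Δ = f s₁ - f s₂`. Differentiating `log ‖Δ‖²` in `s₂` gives `-2⟪Δ, τ₂⟫ / ‖Δ‖²`, and then in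
`s₁` gives `(4⟪Δ, τ₁⟫⟪Δ, τ₂⟫ - 2‖Δ‖²⟪τ₁, τ₂⟫) / ‖Δ‖⁴`. Since `τ₁, τ₂` are unit vectors,
`‖τ₁ - τ₂‖² = 2 - 2⟪τ₁, τ₂⟫`, and the decomposition becomes an identity of rational functions.
-/

open scoped RealInnerProductSpace
open Filter

variable {E : Type*} [NormedAddCommGroup E] [InnerProductSpace ℝ E]

theorem hasDerivAt_log_norm_sub_sq_right {f : ℝ → E} {τ : E} {a b : ℝ}
    (hf : HasDerivAt f τ b) (hab : f a ≠ f b) :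
    HasDerivAt (fun t => Real.log (‖f a - f t‖ ^ 2))
      (-(2 * ⟪f a - f b, τ⟫) / ‖f a - f b‖ ^ 2) b := by
  have hΔ : ‖f a - f b‖ ^ 2 ≠ 0 := by simpa [sub_eq_zero] using hab
  simpa [inner_neg_right] using ((hasDerivAt_const b (f a)).sub hf).norm_sq.log hΔ

theorem hasDerivAt_deriv_log_norm_sub_sq {f : ℝ → E} {τ₁ τ₂ : E} {s₁ s₂ : ℝ}
    (h₁ : HasDerivAt f τ₁ s₁) (h₂ : HasDerivAt f τ₂ s₂) (hne : f s₁ ≠ f s₂) :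
    HasDerivAt (fun a => deriv (fun b => Real.log (‖f a - f b‖ ^ 2)) s₂)
      ((4 * ⟪f s₁ - f s₂, τ₁⟫ * ⟪f s₁ - f s₂, τ₂⟫ - 2 * ‖f s₁ - f s₂‖ ^ 2 * ⟪τ₁, τ₂⟫)
        / (‖f s₁ - f s₂‖ ^ 2) ^ 2) s₁ := by
  have h_inner : (fun a => -(2 * ⟪f a - f s₂, τ₂⟫) / ‖f a - f s₂‖ ^ 2)
      =ᶠ[nhds s₁] fun a => deriv (fun b => Real.log (‖f a - f b‖ ^ 2)) s₂ := by
    filter_upwards [h₁.continuousAt.eventually_ne hne] with a ha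
    exact (hasDerivAt_log_norm_sub_sq_right h₂ ha).deriv.symm
  have hΔ : HasDerivAt (fun a => f a - f s₂) τ₁ s₁ := h₁.sub_const (f s₂)
  have hnum : HasDerivAt (fun a => -(2 * ⟪f a - f s₂, τ₂⟫)) (-(2 * ⟪τ₁, τ₂⟫)) s₁ := by
    have h := hΔ.inner ℝ (hasDerivAt_const s₁ τ₂)
    rw [inner_zero_right, zero_add] at h
    exact (h.const_mul 2).neg
  have hden : ‖f s₁ - f s₂‖ ^ 2 ≠ 0 := by simpa [sub_eq_zero] using hne
  refine ((hnum.div hΔ.norm_sq hden).congr_of_eventuallyEq h_inner.symm).congr_deriv ?_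
  ring

theorem norm_sub_sq_eq_of_norm_eq_one {x y : E} (hx : ‖x‖ = 1) (hy : ‖y‖ = 1) :
    ‖x - y‖ ^ 2 = 2 - 2 * ⟪x, y⟫ := by
  rw [norm_sub_sq_real, hx, hy]
  ring

/-- Pointwise decomposition `M₀(f) = M₁(f) + M₂(f)` for a `C²` embedded
arc-length parametrized curve. -/
theorem stmt_7 {n : ℕ} (f : ℝ → EuclideanSpace ℝ (Fin n))
    (hf : ContDiff ℝ 2 f) (hunit : ∀ s, ‖deriv f s‖ = 1)
    (hinj : Function.Injective f) (s1 s2 : ℝ) (hs : s1 ≠ s2) :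
    (1 - (‖f s1 - f s2‖ ^ 2 / 2) *
        deriv (fun a => deriv (fun b => Real.log (‖f a - f b‖ ^ 2)) s2) s1)
          / ‖f s1 - f s2‖ ^ 2
      = ‖deriv f s1 - deriv f s2‖ ^ 2 / (2 * ‖f s1 - f s2‖ ^ 2)
        + (2 / ‖f s1 - f s2‖ ^ 2) *
            (⟪deriv f s1, deriv f s2⟫
              - ⟪deriv f s1, f s1 - f s2⟫ * ⟪deriv f s2, f s1 - f s2⟫
                  / ‖f s1 - f s2‖ ^ 2) := by
  have hd : ∀ s, HasDerivAt f (deriv f s) s :=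
    fun s => (hf.differentiable (by norm_num) s).hasDerivAt
  have hne : f s1 ≠ f s2 := hinj.ne hs
  have hΔ : ‖f s1 - f s2‖ ≠ 0 := by simpa [sub_eq_zero] using hne
  rw [(hasDerivAt_deriv_log_norm_sub_sq (hd s1) (hd s2) hne).deriv,
    norm_sub_sq_eq_of_norm_eq_one (hunit s1) (hunit s2),
    real_inner_comm (deriv f s1), real_inner_comm (deriv f s2)]
  field_simp
  ring
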